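/- For a lattice polygon T contained in ℝ≥0² that does not contain the origin (0,0), the quantity τ(T) = 2S − a − b is nonnegative, where S is the area of T, and a, b are the lengths of T ∩ (x-axis) and T ∩ (y-axis) respectively. -/

import Mathlib

open MeasureTheory

/-- `T` is a lattice polygon: the convex hull of a nonempty finite set of points of `ℕ × ℕ`,
with nonempty interior (a genuine two-dimensional polygon). -/
def IsLatticePolygon (T : Set (ℝ × ℝ)) : Prop :=
  (∃ V : Finset (ℕ × ℕ), V.Nonempty ∧
    T = convexHull ℝ ((fun v : ℕ × ℕ => ((v.1 : ℝ), (v.2 : ℝ))) '' (V : Set (ℕ × ℕ)))) ∧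
  (interior T).Nonempty

/-- `τ(T) = 2S - a - b` where `S` is the area of `T` and `a`, `b` are the lengths of the
intersections of `T` with the `x`- and `y`-axis. -/
noncomputable def tau (T : Set (ℝ × ℝ)) : ℝ :=
  2 * (volume T).toReal - (volume {x : ℝ | (x, (0:ℝ)) ∈ T}).toReal
    - (volume {y : ℝ | ((0:ℝ), y) ∈ T}).toReal

/-!
Since the origin is not a vertex, every vertex `v` of `T` has `v.1 + v.2 ≥ 1`, and so does every
point of `T`. Hence the axis slices of `T` are segments `[p, P] × {0}` and `{0} × [q, Q]` with
`p, q ≥ 1`. If both are nonempty, `T` contains the quadrilateral spanned by them, whose area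
`((Q - q) P + (P - p) q) / 2` is at least `((Q - q) + (P - p)) / 2`. If only `{0} × [q, Q]` is
nonempty, `T` contains the triangle on it with apex a vertex `(e, h)` with `e ≥ 1` (one exists
since `T` has interior), of area `(Q - q) e / 2 ≥ (Q - q) / 2`; the case of `[p, P] × {0}` is
symmetric.
-/

open Set

lemma exists_apply_ne_zero_of_interior_convexHull_nonempty {E : Type*} [AddCommGroup E]
    [Module ℝ E] [TopologicalSpace E] [ContinuousAdd E] [ContinuousSMul ℝ E] {s : Set E}
    (f : E →ₗ[ℝ] ℝ) (hf : f ≠ 0) (hs : (interior (convexHull ℝ s)).Nonempty) :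
    ∃ z ∈ s, f z ≠ 0 := by
  by_contra! h
  have hker : LinearMap.ker f = ⊤ := (LinearMap.ker f).eq_top_of_nonempty_interior'
    (hs.mono (interior_mono (convexHull_min h (LinearMap.ker f).convex)))
  exact hf (LinearMap.ker_eq_top.1 hker)

lemma convexHull_natCast_subset_one_le_add {V : Set (ℕ × ℕ)} (h0 : (0, 0) ∉ V) :
    convexHull ℝ ((fun v : ℕ × ℕ => ((v.1 : ℝ), (v.2 : ℝ))) '' V) ⊆ {z | 1 ≤ z.1 + z.2} := by
  refine convexHull_min ?_
    (convex_halfSpace_ge (LinearMap.fst ℝ ℝ ℝ + LinearMap.snd ℝ ℝ ℝ).isLinear 1)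
  rintro _ ⟨v, hv, rfl⟩
  have hv0 : v ≠ (0, 0) := fun h => h0 (h ▸ hv)
  have : 1 ≤ v.1 + v.2 := by
    by_contra! h
    exact hv0 (Prod.ext (by omega) (by omega))
  show (1 : ℝ) ≤ v.1 + v.2
  exact_mod_cast this

def yAxisSlice (T : Set (ℝ × ℝ)) : Set ℝ := {y | ((0 : ℝ), y) ∈ T}

/-- The open triangle with vertices `(0, q)`, `(0, Q)` and `(e, h)`, for `q ≤ Q` and `0 < e`. -/
def axisTriangle (q Q e h : ℝ) : Set (ℝ × ℝ) :=
  regionBetween (fun x => q + (h - q) / e * x) (fun x => Q + (h - Q) / e * x) (Ioo 0 e)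

lemma measurableSet_axisTriangle (q Q e h : ℝ) : MeasurableSet (axisTriangle q Q e h) :=
  measurableSet_regionBetween (by fun_prop) (by fun_prop) measurableSet_Ioo

lemma integral_Ioo_one_sub_div {e : ℝ} (he : 0 < e) : ∫ x in Ioo 0 e, (1 - x / e) = e / 2 := by
  rw [← integral_Ioc_eq_integral_Ioo, ← intervalIntegral.integral_of_le he.le]
  simp [intervalIntegral.integral_sub, intervalIntegral.integral_div]
  field_simp
  ring

lemma volume_axisTriangle {q Q e : ℝ} (h : ℝ) (hqQ : q ≤ Q) (he : 0 < e) :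
    volume (axisTriangle q Q e h) = ENNReal.ofReal ((Q - q) * e / 2) := by
  have hlin (c d : ℝ) : IntegrableOn (fun x : ℝ => c + d * x) (Ioo 0 e) :=
    (continuous_const.add (continuous_const.mul continuous_id)).integrableOn_Icc.mono_set
      Ioo_subset_Icc_self
  have hwidth (x : ℝ) :
      (Q + (h - Q) / e * x) - (q + (h - q) / e * x) = (Q - q) * (1 - x / e) := by
    field_simp
    ring
  rw [Measure.volume_eq_prod, axisTriangle,
    volume_regionBetween_eq_integral (hlin _ _) (hlin _ _) measurableSet_Ioo]
  · simp only [Pi.sub_apply, hwidth, integral_const_mul, integral_Ioo_one_sub_div he]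
    ring_nf
  · intro x hx
    have : 0 ≤ (Q - q) * (1 - x / e) :=
      mul_nonneg (sub_nonneg.2 hqQ) (sub_nonneg.2 ((div_le_one he).2 hx.2.le))
    linarith [hwidth x]

lemma axisTriangle_subset {T : Set (ℝ × ℝ)} (hT : Convex ℝ T) {q Q e h : ℝ} (he : 0 < e)
    (hseg : Icc q Q ⊆ yAxisSlice T) (hapex : (e, h) ∈ T) :
    axisTriangle q Q e h ⊆ T := by
  rintro ⟨x, y⟩ ⟨⟨hx0, hxe⟩, hlow, hup⟩
  set s := x / e
  have hs0 : 0 < s := div_pos hx0 he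
  have hs1 : 0 < 1 - s := sub_pos.2 ((div_lt_one he).2 hxe)
  -- `(x, y)` divides the segment from `(0, v)` to the apex in the ratio `s : 1 - s`
  set v := (y - s * h) / (1 - s)
  have hqv : q ≤ v := by
    rw [le_div_iff₀ hs1]
    linarith [show (h - q) / e * x = (h - q) * s by ring]
  have hvQ : v ≤ Q := by
    rw [div_le_iff₀ hs1]
    linarith [show (h - Q) / e * x = (h - Q) * s by ring]
  have hxy : (x, y) = s • (e, h) + (1 - s) • ((0 : ℝ), v) := by
    ext
    · simp [s, he.ne']
    · simp only [Prod.snd_add, Prod.smul_snd, smul_eq_mul, v]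
      field_simp
      ring
  rw [hxy]
  exact hT hapex (hseg ⟨hqv, hvQ⟩) hs0.le hs1.le (by ring)

lemma disjoint_axisTriangle_preimage_swap {p P q Q : ℝ} (hP : 0 < P) (hq : 0 < q) :
    Disjoint (axisTriangle q Q P 0) (Prod.swap ⁻¹' axisTriangle p P q 0) := by
  rw [Set.disjoint_left]
  rintro ⟨x, y⟩ ⟨-, hlow, -⟩ ⟨-, -, hup⟩
  simp only [Prod.swap_prod_mk] at hlow hup
  field_simp at hlow hup
  linarith

lemma volume_preimage_swap (s : Set (ℝ × ℝ)) : volume (Prod.swap ⁻¹' s) = volume s := by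
  rw [Measure.volume_eq_prod]
  exact Measure.measurePreserving_swap.measure_preimage_emb
    MeasurableEquiv.prodComm.measurableEmbedding s

lemma convex_preimage_swap {T : Set (ℝ × ℝ)} (hT : Convex ℝ T) : Convex ℝ (Prod.swap ⁻¹' T) :=
  hT.linear_preimage (LinearEquiv.prodComm ℝ ℝ ℝ).toLinearMap

lemma tau_eq (T : Set (ℝ × ℝ)) : tau T = 2 * (volume T).toReal
    - (volume (yAxisSlice (Prod.swap ⁻¹' T))).toReal - (volume (yAxisSlice T)).toReal := rfl

section Slices

variable {T : Set (ℝ × ℝ)}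

lemma convex_yAxisSlice (hT : Convex ℝ T) : Convex ℝ (yAxisSlice T) :=
  hT.linear_preimage (LinearMap.inr ℝ ℝ ℝ)

lemma isCompact_yAxisSlice (hT : IsCompact T) : IsCompact (yAxisSlice T) :=
  (hT.image continuous_snd).of_isClosed_subset
    (hT.isClosed.preimage (continuous_const.prodMk continuous_id)) fun y hy => ⟨(0, y), hy, rfl⟩

lemma exists_yAxisSlice_eq_Icc (hconv : Convex ℝ T) (hcomp : IsCompact T)
    (hne : (yAxisSlice T).Nonempty) : ∃ q Q, q ≤ Q ∧ yAxisSlice T = Icc q Q :=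
  ⟨_, _, csInf_le_csSup hne (isCompact_yAxisSlice hcomp).bddBelow
      (isCompact_yAxisSlice hcomp).bddAbove,
    eq_Icc_of_connected_compact ((convex_yAxisSlice hconv).isConnected hne)
      (isCompact_yAxisSlice hcomp)⟩

lemma volume_yAxisSlice_le (hconv : Convex ℝ T) (hcomp : IsCompact T)
    (hx : ∃ z ∈ T, 1 ≤ z.1) : (volume (yAxisSlice T)).toReal ≤ 2 * (volume T).toReal := by
  rcases (yAxisSlice T).eq_empty_or_nonempty with hY | hY
  · rw [hY, measure_empty, ENNReal.toReal_zero]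
    positivity
  obtain ⟨q, Q, hqQ, hY⟩ := exists_yAxisSlice_eq_Icc hconv hcomp hY
  obtain ⟨⟨e, h⟩, hz, he⟩ := hx
  have hsub := axisTriangle_subset hconv (e := e) (h := h) (by linarith)
    hY.symm.subset hz
  have harea : (Q - q) * e / 2 ≤ (volume T).toReal := by
    rw [← ENNReal.ofReal_le_iff_le_toReal hcomp.measure_lt_top.ne,
      ← volume_axisTriangle h hqQ (by linarith)]
    exact measure_mono hsub
  rw [hY, Real.volume_Icc, ENNReal.toReal_ofReal (sub_nonneg.2 hqQ)]
  nlinarith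

/-- `T` contains the quadrilateral with vertices `(p, 0)`, `(P, 0)`, `(0, Q)`, `(0, q)`, the union
of two triangles on either side of its diagonal from `(P, 0)` to `(0, q)`. -/
lemma volume_quadrilateral_le (hconv : Convex ℝ T) {p P q Q : ℝ} (hpP : p ≤ P) (hqQ : q ≤ Q)
    (hP : 0 < P) (hq : 0 < q) (hX : Icc p P ⊆ yAxisSlice (Prod.swap ⁻¹' T))
    (hY : Icc q Q ⊆ yAxisSlice T) :
    ENNReal.ofReal ((Q - q) * P / 2) + ENNReal.ofReal ((P - p) * q / 2) ≤ volume T := by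
  have hA : axisTriangle q Q P 0 ⊆ T :=
    axisTriangle_subset hconv hP hY (hX ⟨hpP, le_rfl⟩)
  have hB : Prod.swap ⁻¹' axisTriangle p P q 0 ⊆ T := fun z hz =>
    Prod.swap_swap z ▸ axisTriangle_subset (convex_preimage_swap hconv) hq hX (hY ⟨le_rfl, hqQ⟩) hz
  rw [← volume_axisTriangle 0 hqQ hP, ← volume_axisTriangle 0 hpP hq,
    ← volume_preimage_swap (axisTriangle p P q 0),
    ← measure_union (disjoint_axisTriangle_preimage_swap hP hq)
      ((measurableSet_axisTriangle p P q 0).preimage measurable_swap)]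
  exact measure_mono (union_subset hA hB)

theorem volume_axisSlices_le (hconv : Convex ℝ T) (hcomp : IsCompact T)
    (hdiag : ∀ z ∈ T, 1 ≤ z.1 + z.2) (hx : ∃ z ∈ T, 1 ≤ z.1) (hy : ∃ z ∈ T, 1 ≤ z.2) :
    (volume (yAxisSlice (Prod.swap ⁻¹' T))).toReal + (volume (yAxisSlice T)).toReal ≤
      2 * (volume T).toReal := by
  have hconv' := convex_preimage_swap hconv
  have hcomp' : IsCompact (Prod.swap ⁻¹' T) := (Homeomorph.prodComm ℝ ℝ).isCompact_preimage.2 hcomp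
  rcases (yAxisSlice (Prod.swap ⁻¹' T)).eq_empty_or_nonempty with hX | hX
  · rw [hX, measure_empty, ENNReal.toReal_zero, zero_add]
    exact volume_yAxisSlice_le hconv hcomp hx
  rcases (yAxisSlice T).eq_empty_or_nonempty with hY | hY
  · rw [hY, measure_empty, ENNReal.toReal_zero, add_zero, ← volume_preimage_swap T]
    obtain ⟨z, hz, hz2⟩ := hy
    exact volume_yAxisSlice_le hconv' hcomp' ⟨z.swap, by simpa using hz, hz2⟩
  obtain ⟨p, P, hpP, hX⟩ := exists_yAxisSlice_eq_Icc hconv' hcomp' hX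
  obtain ⟨q, Q, hqQ, hY⟩ := exists_yAxisSlice_eq_Icc hconv hcomp hY
  have hp : 1 ≤ p := by
    simpa using hdiag (p, 0) (hX.symm.subset ⟨le_rfl, hpP⟩)
  have hq : 1 ≤ q := by
    simpa using hdiag (0, q) (hY.symm.subset ⟨le_rfl, hqQ⟩)
  have harea := volume_quadrilateral_le hconv hpP hqQ (by linarith) (by linarith)
    hX.symm.subset hY.symm.subset
  rw [← ENNReal.ofReal_add (by nlinarith) (by nlinarith),
    ENNReal.ofReal_le_iff_le_toReal hcomp.measure_lt_top.ne] at harea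
  rw [hX, hY, Real.volume_Icc, Real.volume_Icc, ENNReal.toReal_ofReal (sub_nonneg.2 hpP),
    ENNReal.toReal_ofReal (sub_nonneg.2 hqQ)]
  nlinarith

end Slices

theorem tau_nonneg_general (T : Set (ℝ × ℝ)) (hT : IsLatticePolygon T)
    (h0 : ((0:ℝ), (0:ℝ)) ∉ T) :
    0 ≤ tau T := by
  obtain ⟨⟨V, -, rfl⟩, hint⟩ := hT
  set s := (fun v : ℕ × ℕ => ((v.1 : ℝ), (v.2 : ℝ))) '' (V : Set (ℕ × ℕ))
  have hV0 : ((0, 0) : ℕ × ℕ) ∉ (V : Set (ℕ × ℕ)) := fun h =>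
    h0 (subset_convexHull ℝ s ⟨_, h, by simp⟩)
  have hx : ∃ z ∈ convexHull ℝ s, 1 ≤ z.1 := by
    obtain ⟨_, ⟨v, hv, rfl⟩, hv1⟩ := exists_apply_ne_zero_of_interior_convexHull_nonempty
      (LinearMap.fst ℝ ℝ ℝ) (fun h => by simpa using LinearMap.congr_fun h (1, 0)) hint
    exact ⟨_, subset_convexHull ℝ s ⟨v, hv, rfl⟩,
      Nat.one_le_cast_iff_ne_zero.2 (by simpa using hv1)⟩
  have hy : ∃ z ∈ convexHull ℝ s, 1 ≤ z.2 := by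
    obtain ⟨_, ⟨v, hv, rfl⟩, hv1⟩ := exists_apply_ne_zero_of_interior_convexHull_nonempty
      (LinearMap.snd ℝ ℝ ℝ) (fun h => by simpa using LinearMap.congr_fun h (0, 1)) hint
    exact ⟨_, subset_convexHull ℝ s ⟨v, hv, rfl⟩,
      Nat.one_le_cast_iff_ne_zero.2 (by simpa using hv1)⟩
  have hslices := volume_axisSlices_le (convex_convexHull ℝ s)
    ((V.finite_toSet.image _).isCompact_convexHull ℝ)
    (convexHull_natCast_subset_one_le_add hV0) hx hy
  rw [tau_eq]
  linarith

/-- For a lattice polygon `T ⊆ ℝ≥0²` not containing the origin, `τ(T) ≥ 0`. -/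
theorem tau_nonneg (T : Set (ℝ × ℝ)) (hT : IsLatticePolygon T)
    (hpos : T ⊆ {z : ℝ × ℝ | 0 ≤ z.1 ∧ 0 ≤ z.2}) (h0 : ((0:ℝ), (0:ℝ)) ∉ T) :
    0 ≤ tau T :=
  tau_nonneg_general T hT h0
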